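/- arXiv:2307.15600 — 7 statements merged into one kernel-verified Lean document; each statement's English description precedes it below -/
import Mathlib

section
/- For all real k > 0, 1/(2^{1/k} − 1) − k/ln 2 + 1/2 > 0. -/
/-!
Put `a = 1 / (2 ^ (1 / k) - 1) > 0`, so that `1 + a⁻¹ = 2 ^ (1 / k)` and
`log (1 + a⁻¹) = log 2 / k`. The claim becomes `2 / (2a + 1) < log (1 + a⁻¹)`, and the left side
is the first term of the series `log (1 + a⁻¹) = ∑ 2 / (2j + 1) · (2a + 1)^-(2j+1)`, all of whose
terms are positive.
-/

open Real

theorem two_div_two_mul_add_one_lt_log_one_add_inv {a : ℝ} (ha : 0 < a) :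
    2 / (2 * a + 1) < log (1 + a⁻¹) :=
  calc 2 / (2 * a + 1) = 2 * (1 / (2 * ((0 : ℕ) : ℝ) + 1)) * (1 / (2 * a + 1)) ^ (2 * 0 + 1) := by
        norm_num [div_eq_mul_inv]
    _ < log (1 + a⁻¹) :=
        lt_hasSum (hasSum_log_one_add_inv ha) 0 (fun _ _ ↦ by positivity) 1 one_ne_zero
          (by positivity)

theorem phi_aux_pos (k : ℝ) (hk : 0 < k) :
    1 / ((2 : ℝ) ^ (1 / k) - 1) - k / Real.log 2 + 1 / 2 > 0 := by
  have hpow : 1 < (2 : ℝ) ^ (1 / k) := one_lt_rpow one_lt_two (by positivity)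
  set a := 1 / ((2 : ℝ) ^ (1 / k) - 1) with ha_def
  have ha : 0 < a := one_div_pos.mpr (sub_pos.mpr hpow)
  have hlog : log (1 + a⁻¹) = log 2 / k := by
    rw [ha_def, one_div, inv_inv, add_sub_cancel, log_rpow two_pos, one_div_mul_eq_div]
  have key := two_div_two_mul_add_one_lt_log_one_add_inv ha
  rw [hlog] at key
  have : k / log 2 < a + 1 / 2 :=
    calc k / log 2 = (log 2 / k)⁻¹ := (inv_div _ _).symm
      _ < (2 / (2 * a + 1))⁻¹ := inv_strictAnti₀ (by positivity) key
      _ = a + 1 / 2 := by field_simp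
  linarith
end

section
/- Define φ(k) = 1/(2^{1/k} − 1) − k + 1 for real k > 0. Then for every real k ≥ 1, (1/ln 2 − 1)·k + 1/2 < φ(k) ≤ (1/ln 2 − 1)·k + 2 − 1/ln 2, with equality in the upper bound exactly when k = 1. -/
/-!
Put `x = log 2 / k ∈ (0, log 2]`. Then `2 ^ (1 / k) = exp x` and `(1 / log 2 - 1) * k = 1 / x - k`,
so the lower bound says `1 / x - 1 / 2 < 1 / (exp x - 1)`, i.e. `(2 - x) * exp x < 2 + x`, and the
upper bound with its equality case says that `f x = 1 / x - 1 / (exp x - 1)` is at least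
`f (log 2) = 1 / log 2 - 1`, with equality only at `x = log 2`. Both follow from monotonicity:
`(2 + x) - (2 - x) * exp x` increases because `exp (-x) > 1 - x`, and `f` strictly decreases
because `x ^ 2 * exp x < (exp x - 1) ^ 2`, which is `x < 2 * sinh (x / 2)`.
-/

open Real Set

lemma one_sub_mul_exp_lt_one {x : ℝ} (hx : x ≠ 0) : (1 - x) * exp x < 1 := by
  have h := add_one_lt_exp (neg_ne_zero.mpr hx)
  rw [exp_neg] at h
  calc (1 - x) * exp x < (exp x)⁻¹ * exp x := by gcongr; linarith
    _ = 1 := inv_mul_cancel₀ (exp_pos x).ne'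

lemma two_sub_mul_exp_lt_two_add {x : ℝ} (hx : 0 < x) : (2 - x) * exp x < 2 + x := by
  have hderiv (t : ℝ) :
      HasDerivAt (fun t => 2 + t - (2 - t) * exp t) (1 - (1 - t) * exp t) t := by
    refine (((hasDerivAt_id t).const_add 2).sub
      (((hasDerivAt_id t).const_sub 2).mul (hasDerivAt_exp t))).congr_deriv ?_
    simp only [id]
    ring
  have hmono : StrictMonoOn (fun t => 2 + t - (2 - t) * exp t) (Ici 0) := by
    refine strictMonoOn_of_hasDerivWithinAt_pos (convex_Ici 0) (by fun_prop)
      (fun t _ => (hderiv t).hasDerivWithinAt) fun t ht => ?_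
    rw [interior_Ici] at ht
    linarith [one_sub_mul_exp_lt_one (ne_of_gt ht)]
  simpa using hmono self_mem_Ici hx.le hx

lemma one_div_sub_half_lt_one_div_exp_sub_one {x : ℝ} (hx : 0 < x) :
    1 / x - 1 / 2 < 1 / (exp x - 1) := by
  have hex : 0 < exp x - 1 := sub_pos.mpr (one_lt_exp_iff.mpr hx)
  rw [div_sub_div _ _ hx.ne' two_ne_zero, div_lt_div_iff₀ (by positivity) hex]
  linarith [two_sub_mul_exp_lt_two_add hx]

lemma mul_exp_half_lt_exp_sub_one {x : ℝ} (hx : 0 < x) : x * exp (x / 2) < exp x - 1 := by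
  have hsinh : x / 2 < sinh (x / 2) := self_lt_sinh_iff.mpr (by positivity)
  have hsq : exp (x / 2) * exp (x / 2) = exp x := by rw [← exp_add]; ring_nf
  have hinv : exp (-(x / 2)) * exp (x / 2) = 1 := by rw [← exp_add]; simp
  rw [sinh_eq] at hsinh
  nlinarith [exp_pos (x / 2)]

lemma sq_mul_exp_lt_sq_exp_sub_one {x : ℝ} (hx : 0 < x) : x ^ 2 * exp x < (exp x - 1) ^ 2 := by
  have h := pow_lt_pow_left₀ (mul_exp_half_lt_exp_sub_one hx) (by positivity) two_ne_zero
  rwa [mul_pow, ← exp_nat_mul, Nat.cast_ofNat, mul_div_cancel₀ x two_ne_zero] at h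

lemma strictAntiOn_one_div_sub_one_div_exp_sub_one :
    StrictAntiOn (fun x => 1 / x - 1 / (exp x - 1)) (Ioi 0) := by
  have hex {t : ℝ} (ht : 0 < t) : 0 < exp t - 1 := sub_pos.mpr (one_lt_exp_iff.mpr ht)
  have hderiv (t : ℝ) (ht : 0 < t) : HasDerivAt (fun x => 1 / x - 1 / (exp x - 1))
      (-(t ^ 2)⁻¹ + exp t / (exp t - 1) ^ 2) t := by
    have hinv : HasDerivAt (fun x => 1 / x) (-(t ^ 2)⁻¹) t := by
      simpa only [one_div] using hasDerivAt_inv ht.ne'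
    have hinv_exp : HasDerivAt (fun x => 1 / (exp x - 1)) (-exp t / (exp t - 1) ^ 2) t := by
      simp only [one_div]
      exact ((hasDerivAt_exp t).sub_const 1).inv (hex ht).ne'
    refine (hinv.sub hinv_exp).congr_deriv ?_
    ring
  refine strictAntiOn_of_hasDerivWithinAt_neg (convex_Ioi 0)
    (fun t ht => (hderiv t ht).continuousAt.continuousWithinAt)
    (fun t ht => (hderiv t (interior_subset ht)).hasDerivWithinAt) fun t ht => ?_
  rw [interior_Ioi] at ht
  have hlt : exp t / (exp t - 1) ^ 2 < (t ^ 2)⁻¹ := by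
    rw [div_lt_iff₀ (pow_pos (hex ht) 2), inv_mul_eq_div, lt_div_iff₀ (pow_pos ht 2), mul_comm]
    exact sq_mul_exp_lt_sq_exp_sub_one ht
  linarith

theorem phi_bounds (k : ℝ) (hk : 1 ≤ k) :
    let φ : ℝ → ℝ := fun k => 1 / ((2 : ℝ) ^ (1 / k) - 1) - k + 1
    (1 / Real.log 2 - 1) * k + 1 / 2 < φ k ∧
    φ k ≤ (1 / Real.log 2 - 1) * k + 2 - 1 / Real.log 2 ∧
    (φ k = (1 / Real.log 2 - 1) * k + 2 - 1 / Real.log 2 ↔ k = 1) := by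
  intro φ
  set L := log 2
  set x := L / k
  have hL : 0 < L := log_pos one_lt_two
  have hx : 0 < x := div_pos hL (by linarith)
  have hφ : φ k = 1 / (exp x - 1) - k + 1 := by
    show 1 / (2 ^ (1 / k) - 1) - k + 1 = _
    rw [rpow_def_of_pos two_pos, mul_one_div]
  have hlin : (1 / L - 1) * k = 1 / x - k := by
    simp only [x]; field_simp
  have hfL : 1 / L - 1 / (exp L - 1) = 1 / L - 1 := by
    rw [exp_log two_pos]; norm_num
  have hf := strictAntiOn_one_div_sub_one_div_exp_sub_one
  have hup : 1 / L - 1 / (exp L - 1) ≤ 1 / x - 1 / (exp x - 1) :=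
    (hf.le_iff_ge hL hx).mpr (div_le_self hL.le hk)
  have heq : 1 / x - 1 / (exp x - 1) = 1 / L - 1 / (exp L - 1) ↔ k = 1 := by
    rw [hf.injOn.eq_iff hx hL, div_eq_iff (by linarith), eq_comm, mul_eq_left₀ hL.ne']
  refine ⟨?_, ?_, ?_⟩
  · rw [hφ, hlin]; linarith [one_div_sub_half_lt_one_div_exp_sub_one hx]
  · rw [hφ, hlin]; linarith
  · rw [hφ, hlin, ← heq]; constructor <;> intro <;> linarith
end

section
/- Define φ(k) = 1/(2^{1/k} − 1) − k + 1 for real k > 0. Then φ is strictly convex on (0, ∞), i.e., its second derivative is positive for all k > 0. -/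
/-!
With `c = log 2` and `x = c / k`, `φ k = 1 / (eˣ - 1) - k + 1`, and a direct computation gives
`φ'' k = c eˣ (c (eˣ + 1) - 2k (eˣ - 1)) / (k⁴ (eˣ - 1)³)`. Its sign is that of
`x (eˣ + 1) - 2 (eˣ - 1)`, which vanishes at `0` and has derivative `x eˣ - eˣ + 1 > 0`
(this is `e⁻ˣ > 1 - x`), so it is positive for `x > 0`.
-/

open Real Set Filter Topology

lemma deriv_deriv_eq_of_hasDerivAt {f f' : ℝ → ℝ} {f'' x : ℝ} {s : Set ℝ} (hs : s ∈ 𝓝 x)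
    (hf : ∀ y ∈ s, HasDerivAt f (f' y) y) (hf' : HasDerivAt f' f'' x) :
    deriv (deriv f) x = f'' := by
  have : deriv f =ᶠ[𝓝 x] f' := eventually_of_mem hs fun y hy => (hf y hy).deriv
  rw [this.deriv_eq, hf'.deriv]

lemma mul_exp_sub_exp_add_one_pos {x : ℝ} (hx : x ≠ 0) : 0 < x * exp x - exp x + 1 := by
  have h := add_one_lt_exp (neg_ne_zero.2 hx)
  have : x * exp x - exp x + 1 = exp x * (exp (-x) - (-x + 1)) := by
    rw [mul_sub, ← exp_add, add_neg_cancel, exp_zero]; ring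
  rw [this]
  exact mul_pos (exp_pos x) (sub_pos.2 h)

/-- Equivalently `tanh (x / 2) < x / 2`. -/
lemma two_mul_exp_sub_one_lt {x : ℝ} (hx : 0 < x) : 2 * (exp x - 1) < x * (exp x + 1) := by
  let h : ℝ → ℝ := fun x => x * (exp x + 1) - 2 * (exp x - 1)
  have hd : ∀ x, HasDerivAt h (x * exp x - exp x + 1) x := fun x => by
    refine (((hasDerivAt_id' x).mul ((hasDerivAt_exp x).add_const 1)).sub
      (((hasDerivAt_exp x).sub_const 1).const_mul 2)).congr_deriv ?_
    ring
  have hmono : StrictMonoOn h (Ici 0) := by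
    refine strictMonoOn_of_deriv_pos (convex_Ici 0)
      (fun x _ => (hd x).continuousAt.continuousWithinAt) fun x hx => ?_
    rw [interior_Ici] at hx
    rw [(hd x).deriv]
    exact mul_exp_sub_exp_add_one_pos hx.ne'
  have := hmono self_mem_Ici hx.le hx
  simp only [h, zero_mul, exp_zero] at this
  linarith

section
variable {c k : ℝ}

lemma hasDerivAt_exp_const_div (hk : k ≠ 0) :
    HasDerivAt (fun k => exp (c / k)) (-(c * exp (c / k) / k ^ 2)) k := by
  have := ((hasDerivAt_inv hk).const_mul c).exp
  simp only [← div_eq_mul_inv] at this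
  refine this.congr_deriv ?_
  ring

lemma exp_div_sub_one_ne_zero (hc : c ≠ 0) (hk : k ≠ 0) : exp (c / k) - 1 ≠ 0 := by
  rw [sub_ne_zero, Ne, exp_eq_one_iff]
  exact div_ne_zero hc hk

lemma exp_div_sub_one_pos (hc : 0 < c) (hk : 0 < k) : 0 < exp (c / k) - 1 :=
  sub_pos.2 (one_lt_exp_iff.2 (div_pos hc hk))

lemma hasDerivAt_inv_exp_div_sub_one (hc : c ≠ 0) (hk : k ≠ 0) :
    HasDerivAt (fun k => (exp (c / k) - 1)⁻¹)
      (c * exp (c / k) / (k ^ 2 * (exp (c / k) - 1) ^ 2)) k := by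
  refine (((hasDerivAt_exp_const_div hk).sub_const 1).inv
    (exp_div_sub_one_ne_zero hc hk)).congr_deriv ?_
  field_simp

lemma hasDerivAt_deriv_inv_exp_div_sub_one (hc : c ≠ 0) (hk : k ≠ 0) :
    HasDerivAt (fun k => c * exp (c / k) / (k ^ 2 * (exp (c / k) - 1) ^ 2))
      (c * exp (c / k) * (c * (exp (c / k) + 1) - 2 * k * (exp (c / k) - 1)) /
        (k ^ 4 * (exp (c / k) - 1) ^ 3)) k := by
  have he := exp_div_sub_one_ne_zero hc hk
  have hE := hasDerivAt_exp_const_div (c := c) hk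
  have := (hE.const_mul c).div ((hasDerivAt_pow 2 k).mul ((hE.sub_const 1).pow 2))
    (mul_ne_zero (pow_ne_zero 2 hk) (pow_ne_zero 2 he))
  refine this.congr_deriv ?_
  simp only [Pi.mul_apply, Pi.pow_apply, Nat.cast_ofNat]
  field_simp
  ring

lemma second_deriv_inv_exp_div_sub_one_pos (hc : 0 < c) (hk : 0 < k) :
    0 < c * exp (c / k) * (c * (exp (c / k) + 1) - 2 * k * (exp (c / k) - 1)) /
      (k ^ 4 * (exp (c / k) - 1) ^ 3) := by
  have hfactor : c * (exp (c / k) + 1) - 2 * k * (exp (c / k) - 1) =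
      k * (c / k * (exp (c / k) + 1) - 2 * (exp (c / k) - 1)) := by
    field_simp
  have hsign : 0 < c / k * (exp (c / k) + 1) - 2 * (exp (c / k) - 1) :=
    sub_pos.2 (two_mul_exp_sub_one_lt (div_pos hc hk))
  have he := exp_div_sub_one_pos hc hk
  rw [hfactor]
  positivity

end

theorem phi_strictly_convex :
    let φ : ℝ → ℝ := fun k => 1 / ((2 : ℝ) ^ (1 / k) - 1) - k + 1
    StrictConvexOn ℝ (Set.Ioi (0 : ℝ)) φ ∧
    ∀ k : ℝ, 0 < k → 0 < deriv (deriv φ) k := by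
  intro φ
  set c := log 2
  have hc : 0 < c := log_pos one_lt_two
  have hφ : φ = fun k => (exp (c / k) - 1)⁻¹ - k + 1 := by
    funext k
    simp only [φ, c, rpow_def_of_pos two_pos, div_eq_mul_inv, one_mul]
  have hφ' : ∀ k ∈ Ioi (0 : ℝ),
      HasDerivAt φ (c * exp (c / k) / (k ^ 2 * (exp (c / k) - 1) ^ 2) - 1) k := fun k hk => by
    rw [hφ]
    exact ((hasDerivAt_inv_exp_div_sub_one hc.ne' hk.ne').sub (hasDerivAt_id' k)).add_const 1
  have hφ'' : ∀ k : ℝ, 0 < k → 0 < deriv (deriv φ) k := fun k hk => by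
    rw [deriv_deriv_eq_of_hasDerivAt (Ioi_mem_nhds hk) hφ'
      ((hasDerivAt_deriv_inv_exp_div_sub_one hc.ne' hk.ne').sub_const 1)]
    exact second_deriv_inv_exp_div_sub_one_pos hc hk
  refine ⟨strictConvexOn_of_deriv2_pos' (convex_Ioi 0)
    (fun k hk => (hφ' k hk).continuousAt.continuousWithinAt) fun k hk => ?_, hφ''⟩
  simpa only [Function.iterate_succ, Function.iterate_zero, Function.comp_apply, id_eq]
    using hφ'' k hk
end

section
/- Define t₀(k) = (k−1)/(2^{1−1/k} − 1) − k for real k > 1. Then for every integer (indeed real) k ≥ 2, 2·ln 2 − 1 < t₀(k) ≤ √2 − 1. -/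
open Real
set_option maxHeartbeats 4000000

private lemma exp_taylor5 (t : ℝ) (ht : 0 ≤ t) :
    1 + t + t^2/2 + t^3/6 + t^4/24 ≤ Real.exp t := by
  have h := Real.sum_le_exp_of_nonneg ht 5
  simp [Finset.sum_range_succ, Nat.factorial] at h
  linarith

-- LOWER bound core: for 0 < x ≤ 1/2,
-- 2 exp(-(c x)) (1+(2c-1)x) < 2 + (2c-2)x,  c = log 2
private lemma core_low (x : ℝ) (hx0 : 0 < x) (hx : x ≤ 1/2) :
    2 * Real.exp (-(Real.log 2 * x)) * (1 + (2*Real.log 2 - 1)*x)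
      < 2 + (2*Real.log 2 - 2)*x := by
  set c := Real.log 2 with hc
  have hc1 : (0.6931471803:ℝ) < c := Real.log_two_gt_d9
  have hc2 : c < 0.6931471808 := Real.log_two_lt_d9
  have ht0 : 0 ≤ c * x := by positivity
  have hQ : 1 + c*x + (c*x)^2/2 + (c*x)^3/6 + (c*x)^4/24 ≤ Real.exp (c*x) :=
    exp_taylor5 _ ht0
  have hE : Real.exp (-(c*x)) * Real.exp (c*x) = 1 := by
    rw [← Real.exp_add]; simp
  have hEp : 0 < Real.exp (-(c*x)) := Real.exp_pos _
  -- exp(-(cx)) * Q ≤ 1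
  have hEQ : Real.exp (-(c*x)) * (1 + c*x + (c*x)^2/2 + (c*x)^3/6 + (c*x)^4/24) ≤ 1 := by
    calc Real.exp (-(c*x)) * (1 + c*x + (c*x)^2/2 + (c*x)^3/6 + (c*x)^4/24)
        ≤ Real.exp (-(c*x)) * Real.exp (c*x) := by
          exact mul_le_mul_of_nonneg_left hQ hEp.le
      _ = 1 := hE
  -- polynomial fact: 2(1+(2c-1)x) < (2+(2c-2)x) * Q
  have hcpos : (0:ℝ) < c := by linarith
  have hq2l : (0.4804530135:ℝ) < c^2 := by
    linarith [mul_pos (sub_pos.2 hc1) (show (0:ℝ) < c + 0.6931471803 by linarith)]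
  have hq2u : c^2 < 0.4804530143 := by
    linarith [mul_pos (sub_pos.2 hc2) (show (0:ℝ) < 0.6931471808 + c by linarith)]
  have hq3l : (0.3330246515:ℝ) < c^3 := by
    linarith [mul_pos (sub_pos.2 hq2l) hcpos, hc1]
  have hq3u : c^3 < 0.3330246524 := by
    linarith [mul_pos (sub_pos.2 hq2u) hcpos, hc2]
  have hq4l : (0.2308350981:ℝ) < c^4 := by
    linarith [mul_pos (sub_pos.2 hq2l) (pow_pos hcpos 2), hq2l]
  have hq4u : c^4 < 0.2308350990 := by
    linarith [mul_pos (sub_pos.2 hq2u) (pow_pos hcpos 2), hq2u]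
  have hq5l : (0.1600026973:ℝ) < c^5 := by
    linarith [mul_pos (sub_pos.2 hq4l) hcpos, hc1]
  have hq5u : c^5 < 0.1600026982 := by
    linarith [mul_pos (sub_pos.2 hq4u) hcpos, hc2]
  have hk0 : (0.055:ℝ) < 3*c^2 - 2*c := by linarith
  have hk1 : (-0.0365:ℝ) < 4*c^3/3 - c^2 := by linarith
  have hk2 : (-0.0149:ℝ) < 5*c^4/12 - c^3/3 := by linarith
  have hk3 : (-0.006:ℝ) < c^5/12 - c^4/12 := by linarith
  have hx2 : x^2 ≤ 1/4 := by nlinarith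
  have hx3 : x^3 ≤ 1/8 := by nlinarith
  have hS : 0.03 < (3*c^2 - 2*c) + (4*c^3/3 - c^2)*x + (5*c^4/12 - c^3/3)*x^2
      + (c^5/12 - c^4/12)*x^3 := by
    have p1 : (-0.0365:ℝ)*x ≤ (4*c^3/3 - c^2)*x :=
      mul_le_mul_of_nonneg_right hk1.le hx0.le
    have p2 : (-0.0149:ℝ)*x^2 ≤ (5*c^4/12 - c^3/3)*x^2 :=
      mul_le_mul_of_nonneg_right hk2.le (sq_nonneg x)
    have p3 : (-0.006:ℝ)*x^3 ≤ (c^5/12 - c^4/12)*x^3 :=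
      mul_le_mul_of_nonneg_right hk3.le (by positivity)
    have hx2' : (-0.0149:ℝ)*x^2 ≥ -0.0149*(1/4) := by nlinarith
    have hx3' : (-0.006:ℝ)*x^3 ≥ -0.006*(1/8) := by nlinarith
    have hx1' : (-0.0365:ℝ)*x ≥ -0.0365*(1/2) := by nlinarith
    linarith
  have hpoly : 2*(1 + (2*c-1)*x)
      < (2 + (2*c-2)*x) * (1 + c*x + (c*x)^2/2 + (c*x)^3/6 + (c*x)^4/24) := by
    have hiden : (2 + (2*c-2)*x) * (1 + c*x + (c*x)^2/2 + (c*x)^3/6 + (c*x)^4/24)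
          - 2*(1 + (2*c-1)*x)
        = x^2 * ((3*c^2 - 2*c) + (4*c^3/3 - c^2)*x + (5*c^4/12 - c^3/3)*x^2
          + (c^5/12 - c^4/12)*x^3) := by ring
    have h2 : 0 < x^2 * ((3*c^2 - 2*c) + (4*c^3/3 - c^2)*x + (5*c^4/12 - c^3/3)*x^2
        + (c^5/12 - c^4/12)*x^3) := mul_pos (pow_pos hx0 2) (by linarith)
    linarith [hiden]
  -- combine
  have hRpos : 0 < 2 + (2*c-2)*x := by nlinarith
  have hQpos : 0 < 1 + c*x + (c*x)^2/2 + (c*x)^3/6 + (c*x)^4/24 := by positivity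
  calc 2 * Real.exp (-(c*x)) * (1 + (2*c - 1)*x)
      = Real.exp (-(c*x)) * (2*(1 + (2*c-1)*x)) := by ring
    _ < Real.exp (-(c*x)) * ((2 + (2*c-2)*x) * (1 + c*x + (c*x)^2/2 + (c*x)^3/6 + (c*x)^4/24)) := by
        exact mul_lt_mul_of_pos_left hpoly hEp
    _ = (2 + (2*c-2)*x) * (Real.exp (-(c*x)) * (1 + c*x + (c*x)^2/2 + (c*x)^3/6 + (c*x)^4/24)) := by ring
    _ ≤ (2 + (2*c-2)*x) * 1 := mul_le_mul_of_nonneg_left hEQ hRpos.le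
    _ = 2 + (2*c-2)*x := by ring

private lemma exp_taylor4' (t : ℝ) (ht : 0 ≤ t) :
    1 + t + t^2/2 + t^3/6 ≤ Real.exp t := by
  have h := Real.sum_le_exp_of_nonneg ht 4
  simp [Finset.sum_range_succ, Nat.factorial] at h
  linarith

private lemma exp_neg_lb' (t : ℝ) (ht0 : 0 ≤ t) (ht : t ≤ 1) :
    1 - t + t^2/2 - t^3/6 - 5*t^4/96 ≤ Real.exp (-t) := by
  have habs : |(-t)| ≤ 1 := by rw [abs_neg, abs_of_nonneg ht0]; exact ht
  have h := Real.exp_bound habs (by norm_num : 0 < 4)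
  simp [Finset.sum_range_succ, Nat.factorial] at h
  rw [abs_sub_le_iff] at h
  have h1 := h.2
  rw [abs_of_nonneg ht0] at h1
  nlinarith [h1]

private lemma core_up (x : ℝ) (hx0 : 0 ≤ x) (hx : x ≤ 1/2) :
    2 + (Real.sqrt 2 - 2)*x ≤ 2 * Real.exp (-(Real.log 2 * x)) * (1 + (Real.sqrt 2 - 1)*x) := by
  set c := Real.log 2 with hc
  set r := Real.sqrt 2 with hr
  have hc1 : (0.6931471803:ℝ) < c := Real.log_two_gt_d9
  have hc2 : c < 0.6931471808 := Real.log_two_lt_d9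
  have hr2 : r^2 = 2 := Real.sq_sqrt (by norm_num)
  have hrn : 0 ≤ r := Real.sqrt_nonneg 2
  have hr1 : (1.41421356:ℝ) < r := by nlinarith
  have hr3 : r < 1.41421357 := by nlinarith
  -- power bounds
  have hcpos : (0:ℝ) < c := by linarith
  have hq2l : (0.4804530135:ℝ) < c^2 := by
    linarith [mul_pos (sub_pos.2 hc1) (show (0:ℝ) < c + 0.6931471803 by linarith)]
  have hq2u : c^2 < 0.4804530143 := by
    linarith [mul_pos (sub_pos.2 hc2) (show (0:ℝ) < 0.6931471808 + c by linarith)]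
  have hq3l : (0.3330246515:ℝ) < c^3 := by
    linarith [mul_pos (sub_pos.2 hq2l) hcpos, hc1]
  have hq3u : c^3 < 0.3330246524 := by
    linarith [mul_pos (sub_pos.2 hq2u) hcpos, hc2]
  have hq4l : (0.2308350981:ℝ) < c^4 := by
    linarith [mul_pos (sub_pos.2 hq2l) (pow_pos hcpos 2), hq2l]
  have hq4u : c^4 < 0.2308350990 := by
    linarith [mul_pos (sub_pos.2 hq2u) (pow_pos hcpos 2), hq2u]
  have hcrl : (0.9802581414:ℝ) < c*r := by
    linarith [mul_pos (sub_pos.2 hc1) (sub_pos.2 hr1), hc1, hr1]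
  have hcru : c*r < 0.9802581491 := by
    linarith [mul_pos (sub_pos.2 hc2) (sub_pos.2 hr1), hc2, hr3]
  have hc2rl : (0.6794631666:ℝ) < c^2*r := by
    linarith [mul_pos (sub_pos.2 hq2l) (sub_pos.2 hr1), hq2l, hr1]
  have hc2ru : c^2*r < 0.6794631726 := by
    linarith [mul_pos (sub_pos.2 hq2u) (sub_pos.2 hr1), hq2u, hr3]
  have hc3rl : (0.4709679779:ℝ) < c^3*r := by
    linarith [mul_pos (sub_pos.2 hq3l) (sub_pos.2 hr1), hq3l, hr1]
  have hc3ru : c^3*r < 0.4709679826 := by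
    linarith [mul_pos (sub_pos.2 hq3u) (sub_pos.2 hr1), hq3u, hr3]
  have hc4rl : (0.3264501258:ℝ) < c^4*r := by
    linarith [mul_pos (sub_pos.2 hq4l) (sub_pos.2 hr1), hq4l, hr1]
  have hc4ru : c^4*r < 0.3264501295 := by
    linarith [mul_pos (sub_pos.2 hq4u) (sub_pos.2 hr1), hq4u, hr3]
  rcases le_or_gt x (1/4) with hcase | hcase
  · -- x ∈ [0, 1/4]
    have ht0 : 0 ≤ c*x := by positivity
    have ht1 : c*x ≤ 1 := by nlinarith
    have hC : 1 - c*x + (c*x)^2/2 - (c*x)^3/6 - 5*(c*x)^4/96 ≤ Real.exp (-(c*x)) :=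
      exp_neg_lb' _ ht0 ht1
    have hmul : 0 ≤ 2*(1 + (r-1)*x) := by
      linarith [mul_nonneg (show (0:ℝ) ≤ r - 1 by linarith) hx0]
    have hb1 : (0.0279:ℝ) < r - 2*c := by linarith
    have hb2 : (-0.0938:ℝ) < 2*c - 2*c*r + c^2 := by linarith
    have hb3 : (0:ℝ) < -c^2 + c^2*r - c^3/3 := by linarith
    have hb4 : (-0.0701:ℝ) < c^3/3 - c^3*r/3 - 5*c^4/48 := by linarith
    have hb5 : (-0.00997:ℝ) < 5*c^4/48 - 5*c^4*r/48 := by linarith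
    have hbr : (0.003:ℝ) < (r - 2*c) + (2*c - 2*c*r + c^2)*x + (-c^2 + c^2*r - c^3/3)*x^2
        + (c^3/3 - c^3*r/3 - 5*c^4/48)*x^3 + (5*c^4/48 - 5*c^4*r/48)*x^4 := by
      have p2 : (-0.0938:ℝ)*x ≤ (2*c - 2*c*r + c^2)*x :=
        mul_le_mul_of_nonneg_right hb2.le hx0
      have p3 : (0:ℝ) ≤ (-c^2 + c^2*r - c^3/3)*x^2 :=
        mul_nonneg hb3.le (sq_nonneg x)
      have p4 : (-0.0701:ℝ)*x^3 ≤ (c^3/3 - c^3*r/3 - 5*c^4/48)*x^3 :=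
        mul_le_mul_of_nonneg_right hb4.le (by positivity)
      have p5 : (-0.00997:ℝ)*x^4 ≤ (5*c^4/48 - 5*c^4*r/48)*x^4 :=
        mul_le_mul_of_nonneg_right hb5.le (by positivity)
      have q2 : (-0.0938:ℝ)*x ≥ -0.0938*(1/4) := by nlinarith
      have q4 : (-0.0701:ℝ)*x^3 ≥ -0.0701*(1/64) := by nlinarith
      have q5 : (-0.00997:ℝ)*x^4 ≥ -0.00997*(1/256) := by nlinarith
      linarith
    have hiden : 2*(1 - c*x + (c*x)^2/2 - (c*x)^3/6 - 5*(c*x)^4/96)*(1 + (r-1)*x)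
        - (2 + (r-2)*x)
        = x * ((r - 2*c) + (2*c - 2*c*r + c^2)*x + (-c^2 + c^2*r - c^3/3)*x^2
          + (c^3/3 - c^3*r/3 - 5*c^4/48)*x^3 + (5*c^4/48 - 5*c^4*r/48)*x^4) := by ring
    have hxb : 0 ≤ x * ((r - 2*c) + (2*c - 2*c*r + c^2)*x + (-c^2 + c^2*r - c^3/3)*x^2
          + (c^3/3 - c^3*r/3 - 5*c^4/48)*x^3 + (5*c^4/48 - 5*c^4*r/48)*x^4) :=
      mul_nonneg hx0 (by linarith)
    have hmono : 2*(1 - c*x + (c*x)^2/2 - (c*x)^3/6 - 5*(c*x)^4/96)*(1 + (r-1)*x)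
        ≤ 2 * Real.exp (-(c*x)) * (1 + (r-1)*x) := by
      have h := mul_le_mul_of_nonneg_right hC hmul
      linarith [h]
    linarith
  · -- x ∈ (1/4, 1/2]
    set s := 1/2 - x with hs
    have hs0 : 0 ≤ s := by simp [hs]; linarith
    have hs1 : s ≤ 1/4 := by simp [hs]; linarith
    clear_value s
    have hexp2 : Real.exp (c/2) * Real.exp (c/2) = 2 := by
      rw [← Real.exp_add, show c/2 + c/2 = c from by ring]
      exact Real.exp_log (by norm_num)
    have hrc : Real.exp (c/2) = r := by
      have h2 : Real.sqrt 2 = Real.exp (c/2) := by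
        rw [← Real.sqrt_sq (Real.exp_pos (c/2)).le]
        congr 1
        rw [sq]; exact hexp2.symm
      rw [hr]; exact h2.symm
    have hrpos : (0:ℝ) < r := by linarith
    have hEeq : Real.exp (-(c*x)) = Real.exp (c*s) / r := by
      rw [← hrc, ← Real.exp_sub]
      congr 1
      rw [hs]; ring
    have hT : 1 + c*s + (c*s)^2/2 + (c*s)^3/6 ≤ Real.exp (c*s) :=
      exp_taylor4' _ (by positivity)
    have hv1 : (0.0165:ℝ) < c*(r+1) - 4*r + 4 := by linarith
    have hv2 : (0:ℝ) < c^2*(r+1)/2 - 2*c*(r-1) := by linarith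
    have hv3 : (-0.0651:ℝ) < c^3*(r+1)/6 - c^2*(r-1) := by linarith
    have hv4 : (-0.046:ℝ) < -(c^3*(r-1))/3 := by linarith
    have hbr : (0.01:ℝ) < (c*(r+1) - 4*r + 4) + (c^2*(r+1)/2 - 2*c*(r-1))*s
        + (c^3*(r+1)/6 - c^2*(r-1))*s^2 + (-(c^3*(r-1))/3)*s^3 := by
      have p2 : (0:ℝ) ≤ (c^2*(r+1)/2 - 2*c*(r-1))*s := mul_nonneg hv2.le hs0
      have p3 : (-0.0651:ℝ)*s^2 ≤ (c^3*(r+1)/6 - c^2*(r-1))*s^2 :=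
        mul_le_mul_of_nonneg_right hv3.le (sq_nonneg s)
      have p4 : (-0.046:ℝ)*s^3 ≤ (-(c^3*(r-1))/3)*s^3 :=
        mul_le_mul_of_nonneg_right hv4.le (pow_nonneg hs0 3)
      have hs2 : s^2 ≤ (1/4:ℝ)^2 := pow_le_pow_left₀ hs0 hs1 2
      have hs3 : s^3 ≤ (1/4:ℝ)^3 := pow_le_pow_left₀ hs0 hs1 3
      linarith
    have hV : 0 ≤ 2*(1 + c*s + (c*s)^2/2 + (c*s)^3/6)*(1 + (r-1)*x) - (2*r + (2-2*r)*x) := by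
      have hiden : 2*(1 + c*s + (c*s)^2/2 + (c*s)^3/6)*(1 + (r-1)*(1/2-s))
            - (2*r + (2-2*r)*(1/2-s))
          = s * ((c*(r+1) - 4*r + 4) + (c^2*(r+1)/2 - 2*c*(r-1))*s
            + (c^3*(r+1)/6 - c^2*(r-1))*s^2 + (-(c^3*(r-1))/3)*s^3) := by ring
      have hx_eq : x = 1/2 - s := by rw [hs]; ring
      rw [hx_eq, hiden]
      exact mul_nonneg hs0 (by linarith)
    have hmul2 : 0 ≤ 2*(1 + (r-1)*x) := by
      have h : 0 ≤ (r-1)*x := mul_nonneg (by linarith) hx0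
      linarith
    have hTm : 2*(1 + c*s + (c*s)^2/2 + (c*s)^3/6)*(1 + (r-1)*x)
        ≤ 2*Real.exp (c*s)*(1 + (r-1)*x) := by
      have h := mul_le_mul_of_nonneg_right hT hmul2
      linarith [h]
    have hfinal : 2*r + (2-2*r)*x ≤ 2*Real.exp (c*s)*(1 + (r-1)*x) := by linarith
    have key : (2 + (r-2)*x) * r ≤ 2*Real.exp (c*s)*(1 + (r-1)*x) := by
      have : (2 + (r-2)*x) * r = 2*r + (2-2*r)*x := by linear_combination x*hr2
      linarith
    rw [hEeq]
    have hrhs : 2 * (Real.exp (c*s) / r) * (1 + (r-1)*x)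
        = (2*Real.exp (c*s)*(1 + (r-1)*x))/r := by ring
    rw [hrhs, le_div_iff₀ hrpos]
    exact key



theorem t0_bounds (k : ℝ) (hk : 2 ≤ k) :
    let t₀ : ℝ → ℝ := fun k => (k - 1) / ((2 : ℝ) ^ (1 - 1 / k) - 1) - k
    2 * Real.log 2 - 1 < t₀ k ∧ t₀ k ≤ Real.sqrt 2 - 1 := by
  intro t₀
  have ht : t₀ k = (k - 1) / ((2 : ℝ) ^ (1 - 1 / k) - 1) - k := rfl
  have hk0 : (0:ℝ) < k := by linarith
  set x := 1/k with hxdef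
  have hx0 : 0 < x := by positivity
  have hx : x ≤ 1/2 := by
    rw [hxdef, div_le_div_iff₀ hk0 (by norm_num : (0:ℝ) < 2)]
    linarith
  have hrp : (2:ℝ)^(1 - 1/k) = 2 * Real.exp (-(Real.log 2 * x)) := by
    rw [Real.rpow_def_of_pos (by norm_num : (0:ℝ) < 2),
      show Real.log 2 * (1 - 1/k) = Real.log 2 + -(Real.log 2 * x) from by rw [hxdef]; ring,
      Real.exp_add, Real.exp_log (by norm_num : (0:ℝ) < 2)]
  set E := Real.exp (-(Real.log 2 * x)) with hE
  have hEp : 0 < E := Real.exp_pos _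
  have hkx : k * x = 1 := by
    rw [hxdef]; field_simp
  have hc1 : (0.6931471803:ℝ) < Real.log 2 := Real.log_two_gt_d9
  have hc2 : Real.log 2 < 0.6931471808 := Real.log_two_lt_d9
  have hD : 0 < 2*E - 1 := by
    have h1 : -(Real.log 2 * x) + 1 ≤ E := Real.add_one_le_exp _
    have h2 : Real.log 2 * x ≤ Real.log 2 * (1/2) :=
      mul_le_mul_of_nonneg_left hx (Real.log_nonneg (by norm_num))
    linarith
  rw [ht, hrp]
  constructor
  · -- lower bound
    have hcore := core_low x hx0 hx
    rw [← hE] at hcore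
    have hm := mul_lt_mul_of_pos_left hcore hk0
    have e1 : k * (2*E*(1 + (2*Real.log 2 - 1)*x)) = 2*E*(k + 2*Real.log 2 - 1) := by
      linear_combination (2*E*(2*Real.log 2 - 1)) * hkx
    have e2 : k * (2 + (2*Real.log 2 - 2)*x) = 2*k + 2*Real.log 2 - 2 := by
      linear_combination (2*Real.log 2 - 2) * hkx
    rw [e1, e2] at hm
    have hgoal : (2*Real.log 2 - 1 + k) * (2*E - 1) < k - 1 := by linarith [hm]
    have hfin := (lt_div_iff₀ hD).2 hgoal
    linarith
  · -- upper bound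
    have hcore := core_up x hx0.le hx
    rw [← hE] at hcore
    have hm := mul_le_mul_of_nonneg_left hcore hk0.le
    have e1 : k * (2*E*(1 + (Real.sqrt 2 - 1)*x)) = 2*E*(k + Real.sqrt 2 - 1) := by
      linear_combination (2*E*(Real.sqrt 2 - 1)) * hkx
    have e2 : k * (2 + (Real.sqrt 2 - 2)*x) = 2*k + Real.sqrt 2 - 2 := by
      linear_combination (Real.sqrt 2 - 2) * hkx
    rw [e1, e2] at hm
    have hgoal : k - 1 ≤ (k + Real.sqrt 2 - 1) * (2*E - 1) := by linarith [hm]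
    have hfin := (div_le_iff₀ hD).2 hgoal
    linarith
end

section
/- The limit of t₀(k) = (k−1)/(2^{1−1/k} − 1) − k as k → 1⁺ equals 1/ln 2 − 1, and the limit as k → 0⁺ equals 1. -/
open Real Filter Set Topology

theorem t0_limits :
    let t₀ : ℝ → ℝ := fun k => (k - 1) / ((2 : ℝ) ^ (1 - 1 / k) - 1) - k
    Filter.Tendsto t₀ (nhdsWithin 1 (Set.Ioi 1)) (nhds (1 / Real.log 2 - 1)) ∧
    Filter.Tendsto t₀ (nhdsWithin 0 (Set.Ioi 0)) (nhds 1) := by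
  intro t₀
  have hlog : Real.log 2 ≠ 0 := ne_of_gt (Real.log_pos one_lt_two)
  constructor
  · -- k → 1⁺
    have hderiv : HasDerivAt (fun x : ℝ => (2 : ℝ) ^ x) (Real.log 2) 0 := by
      have h := (Real.hasStrictDerivAt_const_rpow (a := 2) two_pos 0).hasDerivAt
      simpa using h
    have hslope : Tendsto (fun x : ℝ => ((2 : ℝ) ^ x - 1) / x) (𝓝[≠] (0 : ℝ))
        (𝓝 (Real.log 2)) := by
      have := hasDerivAt_iff_tendsto_slope.mp hderiv
      refine this.congr fun x => ?_
      simp [slope_def_field, div_eq_div_iff]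
    have hg : Tendsto (fun k : ℝ => 1 - 1 / k) (𝓝[>] (1 : ℝ)) (𝓝[≠] (0 : ℝ)) := by
      apply tendsto_nhdsWithin_of_tendsto_nhds_of_eventually_within
      · have : ContinuousAt (fun k : ℝ => 1 - 1 / k) 1 := by
          fun_prop (disch := norm_num)
        have h := this.tendsto.mono_left (nhdsWithin_le_nhds (s := Set.Ioi 1))
        simpa using h
      · filter_upwards [self_mem_nhdsWithin] with k hk
        have hk1 : (1 : ℝ) < k := hk
        have : 1 / k < 1 := by
          rw [div_lt_one (by linarith)]; linarith
        simp only [mem_compl_iff, mem_singleton_iff]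
        intro h
        nlinarith
    have hcomp : Tendsto (fun k : ℝ => ((2 : ℝ) ^ (1 - 1 / k) - 1) / (1 - 1 / k))
        (𝓝[>] (1 : ℝ)) (𝓝 (Real.log 2)) := hslope.comp hg
    have hk1 : Tendsto (fun k : ℝ => k) (𝓝[>] (1 : ℝ)) (𝓝 1) :=
      tendsto_id.mono_left nhdsWithin_le_nhds
    have hdiv : Tendsto (fun k : ℝ => k / (((2 : ℝ) ^ (1 - 1 / k) - 1) / (1 - 1 / k)))
        (𝓝[>] (1 : ℝ)) (𝓝 (1 / Real.log 2)) := hk1.div hcomp hlog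
    have hfinal := hdiv.sub hk1
    refine hfinal.congr' ?_
    filter_upwards [self_mem_nhdsWithin] with k hk
    have hk0 : (k : ℝ) ≠ 0 := by
      have : (1 : ℝ) < k := hk; linarith
    simp only [t₀]
    rw [div_div_eq_mul_div]
    congr 2
    field_simp
  · -- k → 0⁺
    have hnum : Tendsto (fun k : ℝ => k - 1) (𝓝[>] (0 : ℝ)) (𝓝 (-1)) := by
      have : Tendsto (fun k : ℝ => k - 1) (𝓝 (0 : ℝ)) (𝓝 (0 - 1)) :=
        (continuous_id.sub continuous_const).tendsto 0
      simpa using this.mono_left nhdsWithin_le_nhds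
    have hexp : Tendsto (fun k : ℝ => (1 : ℝ) - 1 / k) (𝓝[>] (0 : ℝ)) atBot := by
      have h1 : Tendsto (fun k : ℝ => 1 / k) (𝓝[>] (0 : ℝ)) atTop := by
        simpa [one_div] using tendsto_inv_nhdsGT_zero
      have h2 : Tendsto (fun k : ℝ => -(1 / k)) (𝓝[>] (0 : ℝ)) atBot :=
        tendsto_neg_atTop_atBot.comp h1
      have h3 := tendsto_atBot_add_const_left (𝓝[>] (0 : ℝ)) 1 h2
      refine h3.congr fun k => by ring
    have hpow : Tendsto (fun k : ℝ => (2 : ℝ) ^ (1 - 1 / k)) (𝓝[>] (0 : ℝ)) (𝓝 0) := by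
      have hb : Tendsto (fun x : ℝ => (2 : ℝ) ^ x) atBot (𝓝 0) := by
        have h2 : ∀ x : ℝ, (2 : ℝ) ^ x = Real.exp (x * Real.log 2) := by
          intro x; rw [Real.rpow_def_of_pos two_pos]; ring_nf
        simp_rw [h2]
        refine Real.tendsto_exp_atBot.comp ?_
        exact Tendsto.atBot_mul_const (Real.log_pos one_lt_two) tendsto_id
      exact hb.comp hexp
    have hden : Tendsto (fun k : ℝ => (2 : ℝ) ^ (1 - 1 / k) - 1) (𝓝[>] (0 : ℝ))
        (𝓝 (-1)) := by
      simpa using hpow.sub (tendsto_const_nhds (x := (1 : ℝ)))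
    have hk0 : Tendsto (fun k : ℝ => k) (𝓝[>] (0 : ℝ)) (𝓝 0) :=
      tendsto_id.mono_left nhdsWithin_le_nhds
    have := (hnum.div hden (by norm_num)).sub hk0
    simpa [t₀] using this
end

section
/- Fix positive coprime integers a, b and a real constant c. For x > 0 define y(x) = L^{−1}(c/b − (a/b)·L(x)) and z(x) = x^a · y(x)^b, where L is the pseudolog function. Then z(2^b · x) = z(x) for all x > 0; i.e., z is periodic in L(x) with period b. -/
noncomputable def pseudolog (x : ℝ) : ℝ :=
  (⌊Real.logb 2 x⌋ : ℝ) + ((2 : ℝ) ^ (-⌊Real.logb 2 x⌋ : ℤ) * x - 1)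

noncomputable def pseudologInv (X : ℝ) : ℝ :=
  (2 : ℝ) ^ (⌊X⌋ : ℤ) * (1 + X - ⌊X⌋)

/-!
Multiplying `x` by `2 ^ b` shifts the pseudolog by the integer `b`, so the argument of `L⁻¹` in
`y` drops by the integer `a` and `y` gets scaled by `2 ^ (-a)`. In `z` the factors `2 ^ (a * b)`
and `2 ^ (-(a * b))` cancel.
-/

theorem pseudolog_two_zpow_mul (n : ℤ) {x : ℝ} (hx : 0 < x) :
    pseudolog ((2 : ℝ) ^ n * x) = pseudolog x + n := by
  have hfloor : ⌊Real.logb 2 ((2 : ℝ) ^ n * x)⌋ = ⌊Real.logb 2 x⌋ + n := by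
    rw [Real.logb_mul (by positivity) hx.ne', ← Real.rpow_intCast,
      Real.logb_rpow two_pos (by norm_num), add_comm, Int.floor_add_intCast]
  rw [pseudolog, pseudolog, hfloor, neg_add, zpow_add₀ two_ne_zero, zpow_neg (2 : ℝ) n]
  push_cast
  field_simp
  ring

theorem pseudologInv_add_intCast (X : ℝ) (n : ℤ) :
    pseudologInv (X + n) = (2 : ℝ) ^ n * pseudologInv X := by
  rw [pseudologInv, pseudologInv, Int.floor_add_intCast, zpow_add₀ two_ne_zero]
  push_cast
  ring

theorem z_periodic_general (a b : ℕ) (hb : 0 < b)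
    (c : ℝ) :
    let y : ℝ → ℝ := fun x => pseudologInv (c / b - (a / b) * pseudolog x)
    let z : ℝ → ℝ := fun x => x ^ a * (y x) ^ b
    ∀ x : ℝ, 0 < x → z ((2 : ℝ) ^ b * x) = z x := by
  intro y z x hx
  have hy : y ((2 : ℝ) ^ b * x) = (2 : ℝ) ^ (-(a : ℤ)) * y x := by
    have hL := pseudolog_two_zpow_mul b hx
    rw [zpow_natCast] at hL
    simp only [y, hL, ← pseudologInv_add_intCast]
    congr 1
    field_simp
    push_cast
    ring
  have hcancel : ((2 : ℝ) ^ b) ^ a * ((2 : ℝ) ^ (-(a : ℤ))) ^ b = 1 := by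
    rw [zpow_neg, zpow_natCast, inv_pow, ← pow_mul, ← pow_mul, mul_comm a b,
      mul_inv_cancel₀ (by positivity)]
  calc z ((2 : ℝ) ^ b * x)
      = ((2 : ℝ) ^ b) ^ a * ((2 : ℝ) ^ (-(a : ℤ))) ^ b * z x := by
        simp only [z, hy, mul_pow]; ring
    _ = z x := by rw [hcancel, one_mul]

theorem z_periodic (a b : ℕ) (ha : 0 < a) (hb : 0 < b) (hab : Nat.Coprime a b)
    (c : ℝ) :
    let y : ℝ → ℝ := fun x => pseudologInv (c / b - (a / b) * pseudolog x)
    let z : ℝ → ℝ := fun x => x ^ a * (y x) ^ b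
    ∀ x : ℝ, 0 < x → z ((2 : ℝ) ^ b * x) = z x :=
  z_periodic_general a b hb c
end

section
/- Let 0 < z_min < z_max and b = 2. Set T = (z_max^{3/2} − z_min^{3/2})/(z_max^{1/2} − z_min^{1/2}), U = 2(T/3)^{3/2}, V = (z_min z_max)^{1/2}(z_max − z_min)/(z_max^{1/2} − z_min^{1/2}), c₀ = 2T/(U+V), c₁ = −2/(U+V), ε = (U−V)/(U+V), and z_mid = −c₀/(3c₁) = T/3. Then the error function e(z) = 1 − z^{1/2}(c₀ + c₁ z) satisfies e(z_min) = −e(z_mid) = e(z_max) = ε. -/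
private lemma sq_half (x : ℝ) (hx : 0 ≤ x) : (x ^ ((1:ℝ)/2)) ^ 2 = x := by
  rw [← Real.rpow_natCast (x ^ ((1:ℝ)/2)) 2, ← Real.rpow_mul hx]
  norm_num

private lemma cube_half (x : ℝ) (hx : 0 ≤ x) : x ^ ((3:ℝ)/2) = (x ^ ((1:ℝ)/2)) ^ 3 := by
  rw [← Real.rpow_natCast (x ^ ((1:ℝ)/2)) 3, ← Real.rpow_mul hx]
  norm_num

theorem linear_minimax_equioscillation (zmin zmax : ℝ)
    (h0 : 0 < zmin) (h1 : zmin < zmax) :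
    let T : ℝ := (zmax ^ ((3 : ℝ) / 2) - zmin ^ ((3 : ℝ) / 2)) /
      (zmax ^ ((1 : ℝ) / 2) - zmin ^ ((1 : ℝ) / 2))
    let U : ℝ := 2 * (T / 3) ^ ((3 : ℝ) / 2)
    let V : ℝ := (zmin * zmax) ^ ((1 : ℝ) / 2) * (zmax - zmin) /
      (zmax ^ ((1 : ℝ) / 2) - zmin ^ ((1 : ℝ) / 2))
    let c₀ : ℝ := 2 * T / (U + V)
    let c₁ : ℝ := -2 / (U + V)
    let ε : ℝ := (U - V) / (U + V)
    let zmid : ℝ := T / 3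
    let e : ℝ → ℝ := (fun z => 1 - z ^ ((1 : ℝ) / 2) * (c₀ + c₁ * z))
    (-c₀ / (3 * c₁) = T / 3 ∧ e zmin = ε ∧ e zmid = -ε ∧ e zmax = ε) := by
  intro T U V c₀ c₁ ε zmid e
  set s : ℝ := zmin ^ ((1:ℝ)/2) with hs_def
  set t : ℝ := zmax ^ ((1:ℝ)/2) with ht_def
  have h0' : (0:ℝ) < zmax := h0.trans h1
  have hs0 : 0 < s := Real.rpow_pos_of_pos h0 _
  have hst : s < t := Real.rpow_lt_rpow h0.le h1 (by norm_num)
  have ht0 : 0 < t := hs0.trans hst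
  have hs2 : s ^ 2 = zmin := sq_half _ h0.le
  have ht2 : t ^ 2 = zmax := sq_half _ h0'.le
  have hts : t - s ≠ 0 := sub_ne_zero.mpr hst.ne'
  -- T in terms of s, t
  have hT : T = s ^ 2 + s * t + t ^ 2 := by
    show (zmax ^ ((3:ℝ)/2) - zmin ^ ((3:ℝ)/2)) / (t - s) = _
    rw [cube_half _ h0'.le, cube_half _ h0.le]
    rw [← ht_def, ← hs_def]
    field_simp
    ring
  have hT0 : 0 < T := by
    rw [hT]; positivity
  -- V in terms of s, t
  have hV : V = s * t * (s + t) := by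
    show (zmin * zmax) ^ ((1:ℝ)/2) * (zmax - zmin) / (t - s) = _
    rw [Real.mul_rpow h0.le h0'.le, ← hs_def, ← ht_def, ← hs2, ← ht2]
    field_simp
    ring
  -- r = sqrt(T/3)
  set r : ℝ := (T/3) ^ ((1:ℝ)/2) with hr_def
  have hT3 : (0:ℝ) < T / 3 := by linarith
  have hr0 : 0 < r := Real.rpow_pos_of_pos hT3 _
  have hr2 : r ^ 2 = T / 3 := sq_half _ hT3.le
  have hU : U = 2 * r ^ 3 := by
    show 2 * (T/3) ^ ((3:ℝ)/2) = _
    rw [cube_half _ hT3.le, ← hr_def]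
  have hV0 : 0 < V := by rw [hV]; positivity
  have hU0 : 0 < U := by rw [hU]; positivity
  have hUV : U + V ≠ 0 := by positivity
  refine ⟨?_, ?_, ?_, ?_⟩
  · show -(2 * T / (U + V)) / (3 * (-2 / (U + V))) = T / 3
    field_simp
  · show 1 - zmin ^ ((1:ℝ)/2) * (2 * T / (U + V) + -2 / (U + V) * zmin) = (U - V) / (U + V)
    rw [← hs_def, ← hs2, hT, hU, hV] at *
    field_simp
    ring
  · show 1 - (T/3) ^ ((1:ℝ)/2) * (2 * T / (U + V) + -2 / (U + V) * (T/3)) = -((U - V) / (U + V))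
    rw [← hr_def]
    have hT' : T = 3 * r ^ 2 := by rw [hr2]; ring
    rw [hU, hT'] at *
    field_simp
    ring
  · show 1 - zmax ^ ((1:ℝ)/2) * (2 * T / (U + V) + -2 / (U + V) * zmax) = (U - V) / (U + V)
    rw [← ht_def, ← ht2, hT, hU, hV] at *
    field_simp
    ring
end
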